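/- For Bloch-vector strategies p(0|x0x1,y) = (1 + S_{x0x1}·T_y)/2 with ‖S_{x0x1}‖ ≤ 1 and ‖T_y‖ ≤ 1 in ℝ³, the linear dimension witness satisfies W_L ≤ 2√2, and this bound is attained by S_{00} = (x̂+ŷ)/√2, S_{01} = (x̂−ŷ)/√2, S_{10} = −(x̂−ŷ)/√2, S_{11} = −(x̂+ŷ)/√2 with T_0 = x̂, T_1 = ŷ. -/

import Mathlib

/-- Euclidean dot product on ℝ³. -/
def dot3 (u v : Fin 3 → ℝ) : ℝ := ∑ i, u i * v i

/-- Bloch-vector probabilities p(0|x0x1,y) = (1 + S_{x0x1}·T_y)/2,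
    and p(1|x0x1,y) = 1 − p(0|x0x1,y). -/
noncomputable def blochProb (S : Fin 2 → Fin 2 → Fin 3 → ℝ) (T : Fin 2 → Fin 3 → ℝ)
    (x0 x1 y : Fin 2) : ℝ :=
  (1 + dot3 (S x0 x1) (T y)) / 2

/-- The linear dimension witness W_L. -/
noncomputable def WL (S : Fin 2 → Fin 2 → Fin 3 → ℝ) (T : Fin 2 → Fin 3 → ℝ) : ℝ :=
  blochProb S T 0 0 0 + blochProb S T 0 0 1 + blochProb S T 0 1 0 - blochProb S T 0 1 1
    - blochProb S T 1 0 0 + blochProb S T 1 0 1 - blochProb S T 1 1 0 - blochProb S T 1 1 1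

/-- Optimal preparations S_{00}=(x̂+ŷ)/√2, S_{01}=(x̂−ŷ)/√2, S_{10}=−(x̂−ŷ)/√2,
    S_{11}=−(x̂+ŷ)/√2. -/
noncomputable def Sopt : Fin 2 → Fin 2 → Fin 3 → ℝ
  | 0, 0 => ![1 / Real.sqrt 2, 1 / Real.sqrt 2, 0]
  | 0, 1 => ![1 / Real.sqrt 2, -(1 / Real.sqrt 2), 0]
  | 1, 0 => ![-(1 / Real.sqrt 2), 1 / Real.sqrt 2, 0]
  | 1, 1 => ![-(1 / Real.sqrt 2), -(1 / Real.sqrt 2), 0]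

/-- Optimal measurement directions T_0 = x̂, T_1 = ŷ. -/
def Topt : Fin 2 → Fin 3 → ℝ
  | 0 => ![1, 0, 0]
  | 1 => ![0, 1, 0]

/-!
Writing `u = S₀₀ - S₁₁` and `v = S₀₁ - S₁₀`, the witness is `W_L = (⟪u + v, T₀⟫ + ⟪u - v, T₁⟫) / 2`.
Cauchy–Schwarz bounds it by `(‖u + v‖ + ‖u - v‖) / 2`, and by the parallelogram law
`(‖u + v‖ + ‖u - v‖)² ≤ 2 (‖u + v‖² + ‖u - v‖²) = 4 (‖u‖² + ‖v‖²) ≤ 32`, since `‖u‖, ‖v‖ ≤ 2`.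
-/

open RealInnerProductSpace

section InnerProductSpace

variable {E : Type*} [NormedAddCommGroup E] [InnerProductSpace ℝ E]

theorem real_inner_le_norm_of_norm_le_one (x : E) {t : E} (ht : ‖t‖ ≤ 1) : ⟪x, t⟫ ≤ ‖x‖ :=
  (real_inner_le_norm x t).trans (mul_le_of_le_one_right (norm_nonneg x) ht)

theorem norm_add_add_norm_sub_le {u v : E} {r : ℝ} (hu : ‖u‖ ≤ r) (hv : ‖v‖ ≤ r) :
    ‖u + v‖ + ‖u - v‖ ≤ 2 * √2 * r := by
  have hr : 0 ≤ r := (norm_nonneg u).trans hu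
  have hpar := parallelogram_law_with_norm ℝ u v
  have hsq : (‖u + v‖ + ‖u - v‖) ^ 2 ≤ (2 * √2 * r) ^ 2 := by
    have h2 : √2 ^ 2 = 2 := Real.sq_sqrt zero_le_two
    nlinarith [sq_nonneg (‖u + v‖ - ‖u - v‖), mul_self_le_mul_self (norm_nonneg u) hu,
      mul_self_le_mul_self (norm_nonneg v) hv]
  exact (pow_le_pow_iff_left₀ (by positivity) (by positivity) two_ne_zero).1 hsq

theorem inner_add_inner_le_four_mul_sqrt_two {s₀₀ s₀₁ s₁₀ s₁₁ t₀ t₁ : E}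
    (h₀₀ : ‖s₀₀‖ ≤ 1) (h₀₁ : ‖s₀₁‖ ≤ 1) (h₁₀ : ‖s₁₀‖ ≤ 1) (h₁₁ : ‖s₁₁‖ ≤ 1)
    (ht₀ : ‖t₀‖ ≤ 1) (ht₁ : ‖t₁‖ ≤ 1) :
    ⟪s₀₀ + s₀₁ - s₁₀ - s₁₁, t₀⟫ + ⟪s₀₀ - s₀₁ + s₁₀ - s₁₁, t₁⟫ ≤ 4 * √2 := by
  have hu : ‖s₀₀ - s₁₁‖ ≤ 2 := (norm_sub_le _ _).trans (by linarith)
  have hv : ‖s₀₁ - s₁₀‖ ≤ 2 := (norm_sub_le _ _).trans (by linarith)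
  calc ⟪s₀₀ + s₀₁ - s₁₀ - s₁₁, t₀⟫ + ⟪s₀₀ - s₀₁ + s₁₀ - s₁₁, t₁⟫
      = ⟪(s₀₀ - s₁₁) + (s₀₁ - s₁₀), t₀⟫ + ⟪(s₀₀ - s₁₁) - (s₀₁ - s₁₀), t₁⟫ := by
        congr 2 <;> abel
    _ ≤ ‖(s₀₀ - s₁₁) + (s₀₁ - s₁₀)‖ + ‖(s₀₀ - s₁₁) - (s₀₁ - s₁₀)‖ :=
      add_le_add (real_inner_le_norm_of_norm_le_one _ ht₀) (real_inner_le_norm_of_norm_le_one _ ht₁)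
    _ ≤ 2 * √2 * 2 := norm_add_add_norm_sub_le hu hv
    _ = 4 * √2 := by ring

end InnerProductSpace

theorem dot3_eq_inner (u v : Fin 3 → ℝ) :
    dot3 u v = ⟪WithLp.toLp 2 u, WithLp.toLp 2 v⟫ := by
  simp [dot3, PiLp.inner_apply, mul_comm]

theorem norm_toLp_le_one_iff (u : Fin 3 → ℝ) : ‖WithLp.toLp 2 u‖ ≤ 1 ↔ dot3 u u ≤ 1 := by
  rw [dot3_eq_inner, real_inner_self_eq_norm_sq, sq_le_one_iff₀ (norm_nonneg _)]

theorem WL_eq_inner (S : Fin 2 → Fin 2 → Fin 3 → ℝ) (T : Fin 2 → Fin 3 → ℝ) :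
    let s x₀ x₁ := WithLp.toLp 2 (S x₀ x₁)
    let t y := WithLp.toLp 2 (T y)
    WL S T = (⟪s 0 0 + s 0 1 - s 1 0 - s 1 1, t 0⟫ + ⟪s 0 0 - s 0 1 + s 1 0 - s 1 1, t 1⟫) / 2 := by
  simp only [WL, blochProb, dot3_eq_inner, inner_add_left, inner_sub_left]
  ring

theorem WL_Sopt_Topt : WL Sopt Topt = 2 * √2 := by
  have h : (√2)⁻¹ = √2 / 2 := by
    rw [inv_eq_one_div, div_eq_div_iff (by positivity) two_ne_zero, one_mul,
      Real.mul_self_sqrt zero_le_two]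
  simp only [WL, blochProb, dot3, Sopt, Topt, one_div, h, Fin.sum_univ_three, Fin.isValue,
    Matrix.cons_val_zero, Matrix.cons_val_one, Matrix.cons_val, mul_one, mul_zero, add_zero,
    zero_add, add_halves]
  ring

theorem linear_witness_quantum_bound :
    (∀ (S : Fin 2 → Fin 2 → Fin 3 → ℝ) (T : Fin 2 → Fin 3 → ℝ),
        (∀ x0 x1, dot3 (S x0 x1) (S x0 x1) ≤ 1) → (∀ y, dot3 (T y) (T y) ≤ 1) →
        WL S T ≤ 2 * Real.sqrt 2) ∧
    WL Sopt Topt = 2 * Real.sqrt 2 := by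
  refine ⟨fun S T hS hT => ?_, WL_Sopt_Topt⟩
  simp only [← norm_toLp_le_one_iff] at hS hT
  rw [WL_eq_inner]
  linarith [inner_add_inner_le_four_mul_sqrt_two (hS 0 0) (hS 0 1) (hS 1 0) (hS 1 1) (hT 0) (hT 1)]
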